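/- In a weighted tree with a designated subset S of 'request' nodes and two nodes u, v ∈ S: the minimum length of a walk from u to v visiting all nodes of S equals 2·W − d(u,v), where W is the total edge weight of the minimal (Steiner) subtree of the tree spanning S ∪ {u, v}, and d(u,v) is the tree distance from u to v. -/

import Mathlib

/-!
Every edge of the Steiner tree separates two requests, so a walk visiting all requests crosses
it. In a tree, a walk crosses an edge an even number of times exactly when the edge does not
separate the endpoints of the walk, so every Steiner edge off the `u`–`v` path is crossed at
least twice; weighting gives the lower bound `2 W - d(u, v)`. Conversely, start from the
`u`–`v` path and attach each remaining request `s` by a detour `t → s → t` along a path that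
meets the current walk only at `t`. The edges of that path are new, separate `u` from `s`
(so they belong to the Steiner tree and are off the `u`–`v` path), and are crossed exactly
twice, so the bound is attained.
-/

open scoped Classical

section SumCount

variable {α M : Type*} [DecidableEq α] [AddCommMonoid M]

theorem List.sum_map_eq_sum_count_smul (l : List α) (f : α → M) {D : Finset α}
    (hD : ∀ x ∈ l, x ∈ D) : (l.map f).sum = ∑ x ∈ D, l.count x • f x := by
  rw [Finset.sum_list_map_count]
  refine Finset.sum_subset (fun x hx => hD x (List.mem_toFinset.mp hx)) fun x _ hx => ?_
  rw [List.count_eq_zero_of_not_mem (mt List.mem_toFinset.mpr hx), zero_smul]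

theorem List.sum_count_smul_le_sum_map [PartialOrder M] [IsOrderedAddMonoid M] (l : List α)
    {f : α → M} (hf : ∀ x, 0 ≤ f x) (D : Finset α) :
    ∑ x ∈ D, l.count x • f x ≤ (l.map f).sum := by
  rw [l.sum_map_eq_sum_count_smul f (D := D ∪ l.toFinset) fun x hx =>
    Finset.mem_union_right _ (List.mem_toFinset.mpr hx)]
  exact Finset.sum_le_sum_of_subset_of_nonneg Finset.subset_union_left fun x _ _ =>
    nsmul_nonneg (hf x) _

end SumCount

namespace SimpleGraph

variable {V : Type*} {G : SimpleGraph V} {u v : V}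

theorem IsAcyclic.not_reachable_deleteEdges_of_mem_edges (hT : G.IsAcyclic) {p : G.Walk u v}
    (hp : p.IsPath) {e : Sym2 V} (he : e ∈ p.edges) : ¬(G.deleteEdges {e}).Reachable u v := by
  induction e using Sym2.ind with
  | _ x y =>
    rintro hr
    obtain ⟨q, hq⟩ := reachable_deleteEdges_iff_exists_walk.mp hr
    have hpq : p = q.bypass :=
      congrArg Subtype.val ((hT.subsingleton_path u v).elim ⟨p, hp⟩ ⟨q.bypass, q.bypass_isPath⟩)
    exact hq (q.edges_bypass_subset_edges (hpq ▸ he))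

theorem IsAcyclic.forall_isPath_mem_edges_iff (hT : G.IsAcyclic) (hG : G.Preconnected)
    {e : Sym2 V} :
    (∀ Q : G.Walk u v, Q.IsPath → e ∈ Q.edges) ↔ ¬(G.deleteEdges {e}).Reachable u v := by
  refine ⟨fun h => ?_, fun h Q _ => Q.mem_edges_of_not_reachable_deleteEdges h⟩
  obtain ⟨Q, hQ⟩ := hG.exists_isPath u v
  exact hT.not_reachable_deleteEdges_of_mem_edges hQ (h Q hQ)

theorem Walk.reachable_deleteEdges_of_mem_support (W : G.Walk u v) {e : Sym2 V}
    (he : e ∉ W.edges) {x : V} (hx : x ∈ W.support) : (G.deleteEdges {e}).Reachable u x :=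
  ⟨(W.takeUntil x hx).toDeleteEdge e fun h => he (W.edges_takeUntil_subset_edges hx h)⟩

theorem Preconnected.reachable_deleteEdges_iff_of_isBridge (hG : G.Preconnected) {x y : V}
    (hb : G.IsBridge s(x, y)) (z : V) :
    (G.deleteEdges {s(x, y)}).Reachable z x ↔ ¬(G.deleteEdges {s(x, y)}).Reachable z y := by
  refine ⟨fun hx hy => hb (hx.symm.trans hy), fun hy => ?_⟩
  have hxy : x ≠ y := by rintro rfl; exact hb .rfl
  obtain ⟨P, hP⟩ := hG.exists_isPath z x
  by_cases he : s(x, y) ∈ P.edges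
  · have hyP := P.snd_mem_support_of_mem_edges he
    have hx := Walk.endpoint_notMem_support_takeUntil hP hyP hxy
    exact absurd ⟨(P.takeUntil y hyP).toDeleteEdge _ fun h =>
      hx ((P.takeUntil y hyP).fst_mem_support_of_mem_edges h)⟩ hy
  · exact ⟨P.toDeleteEdge _ he⟩

theorem IsAcyclic.even_count_edges_iff (hT : G.IsAcyclic) (hG : G.Preconnected) (e : Sym2 V)
    (W : G.Walk u v) : Even (W.edges.count e) ↔ (G.deleteEdges {e}).Reachable u v := by
  induction W with
  | nil => simp
  | @cons a c b h q ih =>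
    rw [Walk.edges_cons]
    by_cases he : s(a, c) = e
    · subst he
      have hb := hG.reachable_deleteEdges_iff_of_isBridge
        (isAcyclic_iff_forall_adj_isBridge.mp hT h) b
      rw [List.count_cons_self, Nat.even_add_one, ih, reachable_comm (u := a), hb,
        reachable_comm (u := c)]
    · have hadj : (G.deleteEdges {e}).Adj a c := by simp [h, he]
      rw [List.count_cons_of_ne he, ih]
      exact ⟨hadj.reachable.trans, hadj.symm.reachable.trans⟩

namespace Walk

theorem exists_walk_support_meets_at_start_only (X : Set V) {s x : V} (q : G.Walk s x)
    (hx : x ∈ X) : ∃ t ∈ X, ∃ p : G.Walk t s, ∀ y ∈ p.support, y ∈ X → y = t := by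
  induction q with
  | nil => exact ⟨_, hx, nil, by simp⟩
  | @cons s y x h q ih =>
    by_cases hs : s ∈ X
    · exact ⟨s, hs, nil, by simp⟩
    obtain ⟨t, ht, p, hp⟩ := ih hx
    refine ⟨t, ht, p.concat h.symm, fun z hz hzX => ?_⟩
    rw [support_concat, List.mem_append, List.mem_singleton] at hz
    rcases hz with hz | rfl
    · exact hp z hz hzX
    · exact absurd hzX hs

theorem exists_walk_count_edges_eq_add {t s : V} (W : G.Walk u v) (ht : t ∈ W.support)
    (p : G.Walk t s) : ∃ W' : G.Walk u v, (∀ x ∈ W.support, x ∈ W'.support) ∧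
      s ∈ W'.support ∧ ∀ e, W'.edges.count e = W.edges.count e + 2 * p.edges.count e := by
  refine ⟨(W.takeUntil t ht).append ((p.append p.reverse).append (W.dropUntil t ht)),
    fun x hx => ?_, by simp, fun e => ?_⟩
  · rw [← W.take_spec ht, mem_support_append_iff] at hx
    simp only [mem_support_append_iff]
    tauto
  · conv_rhs => rw [← W.take_spec ht]
    simp only [edges_append, edges_reverse, List.count_append, List.count_reverse]
    ring

end Walk

theorem Preconnected.exists_isPath_edges_disjoint (hG : G.Preconnected) (W : G.Walk u v)
    (s : V) : ∃ t ∈ W.support, ∃ p : G.Walk t s, p.IsPath ∧ ∀ e ∈ p.edges, e ∉ W.edges := by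
  obtain ⟨t, ht, p, hp⟩ := Walk.exists_walk_support_meets_at_start_only {x | x ∈ W.support}
    (hG s u).some W.start_mem_support
  refine ⟨t, ht, p.bypass, p.bypass_isPath, fun e he heW => ?_⟩
  induction e using Sym2.ind with
  | _ x y =>
    have hx := hp x (p.support_bypass_subset_support (p.bypass.fst_mem_support_of_mem_edges he))
      (W.fst_mem_support_of_mem_edges heW)
    have hy := hp y (p.support_bypass_subset_support (p.bypass.snd_mem_support_of_mem_edges he))
      (W.snd_mem_support_of_mem_edges heW)
    exact (p.bypass.adj_of_mem_edges he).ne (hx.trans hy.symm)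

/-- How often a `u`–`v` walk covering the requests must cross an edge `e` of the Steiner tree:
once if `e` lies on the direct path `P`, otherwise twice, since then `e` does not separate
`u` from `v` and is crossed an even number of times. -/
noncomputable def minCrossings (P : G.Walk u v) (e : Sym2 V) : ℕ :=
  if e ∈ P.edges then 1 else 2

theorem minCrossings_le_count (hT : G.IsAcyclic) (hG : G.Preconnected) (P W : G.Walk u v)
    {e : Sym2 V} {a b : V} (ha : a ∈ W.support) (hb : b ∈ W.support)
    (hab : ¬(G.deleteEdges {e}).Reachable a b) : minCrossings P e ≤ W.edges.count e := by
  have hW : e ∈ W.edges := by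
    by_contra he
    exact hab ((W.reachable_deleteEdges_of_mem_support he ha).symm.trans
      (W.reachable_deleteEdges_of_mem_support he hb))
  unfold minCrossings
  split_ifs with hP
  · exact List.count_pos_iff.mpr hW
  · obtain ⟨k, hk⟩ := (hT.even_count_edges_iff hG e W).mpr ⟨P.toDeleteEdge e hP⟩
    have := List.count_pos_iff.mpr hW
    omega

/-- The last conjunct puts every edge of `W` into the Steiner tree of `S ∪ {u, v}`. -/
theorem exists_walk_count_le_minCrossings (hT : G.IsAcyclic) (hG : G.Preconnected)
    {P : G.Walk u v} (hP : P.IsPath) (S : Finset V) :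
    ∃ W : G.Walk u v, (∀ x ∈ S, x ∈ W.support) ∧ (∀ e, W.edges.count e ≤ minCrossings P e) ∧
      ∀ e ∈ W.edges, ∃ a ∈ insert v S, ¬(G.deleteEdges {e}).Reachable u a := by
  induction S using Finset.induction_on with
  | empty =>
    refine ⟨P, by simp, fun e => ?_, fun e he =>
      ⟨v, Finset.mem_insert_self _ _, hT.not_reachable_deleteEdges_of_mem_edges hP he⟩⟩
    unfold minCrossings
    split_ifs
    · exact hP.isTrail.count_edges_le_one e
    · rw [List.count_eq_zero_of_not_mem ‹_›]; omega
  | @insert s S _ ih =>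
    obtain ⟨W, hWS, hWcount, hWsep⟩ := ih
    obtain ⟨t, ht, p, hp, hpW⟩ := hG.exists_isPath_edges_disjoint W s
    obtain ⟨W', hWW', hsW', hcount⟩ := W.exists_walk_count_edges_eq_add ht p
    have hsep : ∀ e ∈ p.edges, ¬(G.deleteEdges {e}).Reachable u s := fun e he hus =>
      hT.not_reachable_deleteEdges_of_mem_edges hp he
        ((W.reachable_deleteEdges_of_mem_support (hpW e he) ht).symm.trans hus)
    refine ⟨W', ?_, fun e => ?_, fun e he => ?_⟩
    · intro x hx
      rcases Finset.mem_insert.mp hx with rfl | hx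
      exacts [hsW', hWW' x (hWS x hx)]
    · rw [hcount]
      by_cases hep : e ∈ p.edges
      · have heP : e ∉ P.edges := fun heP => hpW e hep
          (W.mem_edges_of_not_reachable_deleteEdges
            (hT.not_reachable_deleteEdges_of_mem_edges hP heP))
        rw [List.count_eq_zero_of_not_mem (hpW e hep), hp.isTrail.count_edges_eq_one hep,
          minCrossings, if_neg heP]
      · rw [List.count_eq_zero_of_not_mem hep]
        exact hWcount e
    · by_cases hep : e ∈ p.edges
      · exact ⟨s, by simp, hsep e hep⟩
      · have heW : e ∈ W.edges := by
          by_contra heW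
          rw [← List.count_pos_iff, hcount, List.count_eq_zero_of_not_mem heW,
            List.count_eq_zero_of_not_mem hep] at he
          omega
        obtain ⟨a, ha, hua⟩ := hWsep e heW
        exact ⟨a, by simp at ha ⊢; tauto, hua⟩

theorem minCrossings_add_count {P : G.Walk u v} (hP : P.IsPath) (e : Sym2 V) :
    minCrossings P e + P.edges.count e = 2 := by
  unfold minCrossings
  split_ifs with he
  · rw [hP.isTrail.count_edges_eq_one he]
  · rw [List.count_eq_zero_of_not_mem he]

theorem sum_minCrossings_smul {P : G.Walk u v} (hP : P.IsPath) {D : Finset (Sym2 V)}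
    (hD : ∀ e ∈ P.edges, e ∈ D) (w : Sym2 V → ℝ) :
    ∑ e ∈ D, minCrossings P e • w e = 2 * ∑ e ∈ D, w e - (P.edges.map w).sum := by
  rw [P.edges.sum_map_eq_sum_count_smul w hD, Finset.mul_sum, ← Finset.sum_sub_distrib]
  refine Finset.sum_congr rfl fun e _ => ?_
  rw [eq_sub_iff_add_eq, ← add_smul, minCrossings_add_count hP, two_nsmul, two_mul]

theorem sum_minCrossings_smul_le_sum_map (hT : G.IsAcyclic) (hG : G.Preconnected)
    {w : Sym2 V → ℝ} (hw : ∀ e, 0 ≤ w e) (P W : G.Walk u v) {D : Finset (Sym2 V)}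
    (hD : ∀ e ∈ D, ∃ a ∈ W.support, ∃ b ∈ W.support, ¬(G.deleteEdges {e}).Reachable a b) :
    ∑ e ∈ D, minCrossings P e • w e ≤ (W.edges.map w).sum := by
  refine (Finset.sum_le_sum fun e he => ?_).trans (W.edges.sum_count_smul_le_sum_map hw D)
  obtain ⟨a, ha, b, hb, hab⟩ := hD e he
  exact nsmul_le_nsmul_left (hw e) (minCrossings_le_count hT hG P W ha hb hab)

end SimpleGraph

open SimpleGraph in
/-- In a weighted tree with requests `S` and `u, v ∈ S`: the minimum length of a walk
from `u` to `v` visiting all nodes of `S` equals `2·W − d(u,v)`, where `W` is the total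
edge weight of the minimal (Steiner) subtree spanning `S` (the union of the unique paths
between pairs of nodes of `S`) and `d(u,v)` is the length of the unique `u`–`v` path. -/
theorem stmt7 {V : Type*} [Fintype V] (G : SimpleGraph V) [DecidableRel G.Adj]
    (hG : G.Connected) (hT : G.IsAcyclic)
    (w : Sym2 V → ℝ) (hw : ∀ e, 0 ≤ w e) (S : Finset V) (u v : V)
    (hu : u ∈ S) (hv : v ∈ S) (P : G.Walk u v) (hP : P.IsPath) :
    sInf {L : ℝ | ∃ W : G.Walk u v,
        (∀ x ∈ S, x ∈ W.support) ∧ L = (W.edges.map w).sum} =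
      2 * (∑ e ∈ G.edgeFinset.filter (fun e =>
            ∃ a ∈ S, ∃ b ∈ S, ∀ Q : G.Walk a b, Q.IsPath → e ∈ Q.edges), w e)
        - (P.edges.map w).sum := by
  set D := G.edgeFinset.filter fun e =>
    ∃ a ∈ S, ∃ b ∈ S, ∀ Q : G.Walk a b, Q.IsPath → e ∈ Q.edges
  have hmemD {e : Sym2 V} : e ∈ D ↔
      e ∈ G.edgeSet ∧ ∃ a ∈ S, ∃ b ∈ S, ¬(G.deleteEdges {e}).Reachable a b := by
    simp [D, hT.forall_isPath_mem_edges_iff hG.preconnected]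
  have hlower (W : G.Walk u v) (hW : ∀ x ∈ S, x ∈ W.support) :
      ∑ e ∈ D, minCrossings P e • w e ≤ (W.edges.map w).sum :=
    sum_minCrossings_smul_le_sum_map hT hG.preconnected hw P W fun e he => by
      obtain ⟨-, a, ha, b, hb, hab⟩ := hmemD.mp he
      exact ⟨a, hW a ha, b, hW b hb, hab⟩
  obtain ⟨W, hWS, hWcount, hWsep⟩ :=
    exists_walk_count_le_minCrossings hT hG.preconnected hP S
  have hWD : ∀ e ∈ W.edges, e ∈ D := fun e he => by
    obtain ⟨a, ha, hua⟩ := hWsep e he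
    exact hmemD.mpr ⟨W.edges_subset_edgeSet he, u, hu, a, Finset.insert_eq_of_mem hv ▸ ha, hua⟩
  have hupper : (W.edges.map w).sum ≤ ∑ e ∈ D, minCrossings P e • w e := by
    rw [W.edges.sum_map_eq_sum_count_smul w hWD]
    exact Finset.sum_le_sum fun e _ => nsmul_le_nsmul_left (hw e) (hWcount e)
  rw [← sum_minCrossings_smul hP fun e he => hmemD.mpr ⟨P.edges_subset_edgeSet he,
    u, hu, v, hv, hT.not_reachable_deleteEdges_of_mem_edges hP he⟩]
  refine IsLeast.csInf_eq ⟨⟨W, hWS, (hupper.antisymm (hlower W hWS)).symm⟩, ?_⟩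
  rintro L ⟨W', hW'S, rfl⟩
  exact hlower W' hW'S
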